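/- arXiv:2304.14776 — 2 statements merged into one kernel-verified Lean document; each statement's English description precedes it below -/
import Mathlib

section
/- Let O ∈ ℝ², r > 0, x ∈ ℝ² with x ≠ O, and let γ(s) = O + r·(cos(s/r), sin(s/r)) be the arc-length parametrization of the circle of center O and radius r. If s ≠ s' are two critical points of the function f(s) = ‖x − γ(s)‖ (i.e. f is differentiable at s and s' with f'(s) = f'(s') = 0), then |s − s'| ≥ πr. In particular, f has at most one critical point in any open interval of length at most πr. (This is item (iv) of the geometric Proposition of Section 4: the distance function from a point to a circular arc has at most one critical point in the interior of the arc.) -/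
/-!
At a critical point `t` of `s ↦ ‖x - γ s‖` the chord `x - γ t` is orthogonal to the velocity
`γ' t = unitVec (t / r + π / 2)`; since the radius `γ t - O` is orthogonal to it as well, so is
`x - O`. A nonzero vector of the plane is orthogonal to `unitVec φ` and `unitVec ψ` only if
`sin (φ - ψ) = 0`, so two distinct critical points differ by a nonzero multiple of `π r`.
-/

open Real RealInnerProductSpace

theorem inner_sub_eq_zero_of_deriv_norm_sub_eq_zero {E : Type*} [NormedAddCommGroup E]
    [InnerProductSpace ℝ E] {γ : ℝ → E} {v x : E} {t : ℝ} (hγ : HasDerivAt γ v t)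
    (hd : DifferentiableAt ℝ (fun s => ‖x - γ s‖) t) (h0 : deriv (fun s => ‖x - γ s‖) t = 0) :
    ⟪x - γ t, v⟫ = 0 := by
  have h₁ : HasDerivAt (fun s => ‖x - γ s‖ ^ 2) (2 * ⟪x - γ t, -v⟫) t :=
    ((hasDerivAt_const t x).sub hγ).norm_sq.congr_deriv (by simp)
  have h₂ : HasDerivAt (fun s => ‖x - γ s‖ ^ 2) 0 t := by
    simpa [h0] using hd.hasDerivAt.fun_pow 2
  simpa using h₁.unique h₂

theorem Real.pi_le_abs_of_sin_eq_zero {t : ℝ} (ht : t ≠ 0) (h : sin t = 0) : π ≤ |t| := by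
  by_contra! hlt
  rw [abs_lt] at hlt
  exact ht ((sin_eq_zero_iff_of_lt_of_lt hlt.1 hlt.2).1 h)

noncomputable def unitVec (θ : ℝ) : EuclideanSpace ℝ (Fin 2) :=
  (WithLp.equiv 2 (Fin 2 → ℝ)).symm ![cos θ, sin θ]

theorem unitVec_eq (θ : ℝ) :
    unitVec θ = cos θ • EuclideanSpace.single 0 1 + sin θ • EuclideanSpace.single 1 1 := by
  ext i
  fin_cases i <;> simp [unitVec]

theorem inner_unitVec_right (w : EuclideanSpace ℝ (Fin 2)) (θ : ℝ) :
    ⟪w, unitVec θ⟫ = w 0 * cos θ + w 1 * sin θ := by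
  simp [unitVec_eq, inner_add_right, inner_smul_right, EuclideanSpace.inner_single_right]
  ring

theorem inner_unitVec_unitVec (θ φ : ℝ) : ⟪unitVec θ, unitVec φ⟫ = cos (θ - φ) := by
  rw [inner_unitVec_right, cos_sub]
  simp [unitVec]

theorem hasDerivAt_unitVec (θ : ℝ) : HasDerivAt unitVec (unitVec (θ + π / 2)) θ := by
  have := ((hasDerivAt_cos θ).smul_const (EuclideanSpace.single (0 : Fin 2) (1 : ℝ))).add
    ((hasDerivAt_sin θ).smul_const (EuclideanSpace.single (1 : Fin 2) (1 : ℝ)))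
  rw [show unitVec = _ from funext unitVec_eq]
  exact this.congr_deriv (by simp [cos_add_pi_div_two, sin_add_pi_div_two])

theorem sin_sub_eq_zero_of_inner_unitVec_eq_zero {w : EuclideanSpace ℝ (Fin 2)} (hw : w ≠ 0)
    {θ φ : ℝ} (hθ : ⟪w, unitVec θ⟫ = 0) (hφ : ⟪w, unitVec φ⟫ = 0) : sin (θ - φ) = 0 := by
  rw [inner_unitVec_right] at hθ hφ
  have h₀ : w 0 * sin (θ - φ) = 0 := by
    rw [sin_sub]
    linear_combination sin θ * hφ - sin φ * hθ
  have h₁ : w 1 * sin (θ - φ) = 0 := by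
    rw [sin_sub]
    linear_combination cos φ * hθ - cos θ * hφ
  by_contra h
  exact hw (by ext i; fin_cases i <;> simp_all)

noncomputable def circleParam (O : EuclideanSpace ℝ (Fin 2)) (r s : ℝ) :
    EuclideanSpace ℝ (Fin 2) :=
  O + r • unitVec (s / r)

theorem hasDerivAt_circleParam (O : EuclideanSpace ℝ (Fin 2)) {r : ℝ} (hr : r ≠ 0) (t : ℝ) :
    HasDerivAt (circleParam O r) (unitVec (t / r + π / 2)) t := by
  have := ((hasDerivAt_unitVec (t / r)).scomp t ((hasDerivAt_id t).div_const r)).const_smul r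
  exact (this.const_add O).congr_deriv (by simp [smul_smul, hr])

theorem inner_sub_center_eq_zero_of_deriv_eq_zero (O x : EuclideanSpace ℝ (Fin 2)) {r : ℝ}
    (hr : r ≠ 0) {t : ℝ} (hd : DifferentiableAt ℝ (fun s => ‖x - circleParam O r s‖) t)
    (h0 : deriv (fun s => ‖x - circleParam O r s‖) t = 0) :
    ⟪x - O, unitVec (t / r + π / 2)⟫ = 0 := by
  have := inner_sub_eq_zero_of_deriv_norm_sub_eq_zero (hasDerivAt_circleParam O hr t) hd h0
  rwa [circleParam, sub_add_eq_sub_sub, inner_sub_left, inner_smul_left, inner_unitVec_unitVec,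
    sub_add_cancel_left, cos_neg, cos_pi_div_two, mul_zero, sub_zero] at this

/-- **Critical points of the distance function to a circle are `πr`-separated.**
Let `γ(s) = O + r·(cos(s/r), sin(s/r))` be the unit-speed parametrization of the
circle of center `O` and radius `r`, let `x ≠ O`, and `f(s) = ‖x - γ(s)‖`. If
`s ≠ s'` are two critical points of `f`, then `|s - s'| ≥ πr`; in particular `f`
has at most one critical point in any open interval of length at most `πr`. -/
theorem circle_distance_critical_points_separated
    (O : EuclideanSpace ℝ (Fin 2)) (r : ℝ) (hr : 0 < r)
    (x : EuclideanSpace ℝ (Fin 2)) (hx : x ≠ O)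
    (γ : ℝ → EuclideanSpace ℝ (Fin 2))
    (hγ : ∀ s, γ s = O + r •
      (WithLp.equiv 2 (Fin 2 → ℝ)).symm ![Real.cos (s / r), Real.sin (s / r)])
    (f : ℝ → ℝ) (hf : ∀ s, f s = ‖x - γ s‖)
    (s s' : ℝ) (hne : s ≠ s')
    (hds : DifferentiableAt ℝ f s) (hds0 : deriv f s = 0)
    (hds' : DifferentiableAt ℝ f s') (hds'0 : deriv f s' = 0) :
    Real.pi * r ≤ |s - s'| := by
  obtain rfl : f = fun s => ‖x - circleParam O r s‖ := funext fun s => by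
    rw [hf, hγ]
    rfl
  have hsin : sin ((s - s') / r) = 0 := by
    have := sin_sub_eq_zero_of_inner_unitVec_eq_zero (sub_ne_zero.2 hx)
      (inner_sub_center_eq_zero_of_deriv_eq_zero O x hr.ne' hds hds0)
      (inner_sub_center_eq_zero_of_deriv_eq_zero O x hr.ne' hds' hds'0)
    rwa [add_sub_add_right_eq_sub, ← sub_div] at this
  have := Real.pi_le_abs_of_sin_eq_zero (div_ne_zero (sub_ne_zero.2 hne) hr.ne') hsin
  rwa [abs_div, abs_of_pos hr, le_div_iff₀ hr] at this
end

section
/- Let K ⊆ ℝ² be a nonempty open convex set, let Γ : ℝ → ℝ² be a C¹ curve parametrized by arc length whose range equals the frontier of K, and let x ∈ ℝ² lie outside the closure of K. Write d_x(s) = ‖x − Γ(s)‖ and let m = inf_{s∈ℝ} d_x(s). Suppose s* ∈ ℝ is a local extremum point of d_x (a point having a neighborhood on which d_x(s*) is the maximal or the minimal value of d_x) with d_x(s*) > m, i.e. s* is not a global minimum point. Then the segment from Γ(s*) toward x initially lies inside K: there exists ε > 0 such that Γ(s*) + τ·(x − Γ(s*))/‖x − Γ(s*)‖ ∈ K for every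 τ ∈ (0, ε). (This is Lemma 5.1' of the paper: for a point exterior to the convex side, every extremum of the distance function other than the global minimum is approached from the convex side.) -/
/-!
Write `p = Γ s*` and `u = x - p`. Fermat's rule at `s*` gives `Γ'(s*) ⟂ u`. If the open segment
from `p` to `x` missed `K`, a functional `f` separating `K` from that segment would support `K`
at `p`; as `Γ` stays in `closure K`, `f ∘ Γ` is maximal at `s*`, so `f` kills `Γ'(s*)`. In the
plane this forces `f = μ ⟪u, ·⟫` with `μ > 0`, so the whole curve lies in the half-plane
`⟪u, · - p⟫ ≤ 0`, where every point is at distance at least `‖u‖` from `x`: `s*` would be a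
global minimum of `d_x`. Hence the segment meets `K`, and convexity carries its initial piece
into `K`.
-/

open Set Module RealInnerProductSpace

section Separation

variable {E : Type*} [AddCommGroup E] [Module ℝ E] [TopologicalSpace E] [IsTopologicalAddGroup E]
  [ContinuousSMul ℝ E]

theorem exists_forall_lt_apply_of_disjoint_openSegment {K : Set E} {p x : E} (hKo : IsOpen K)
    (hKc : Convex ℝ K) (hp : p ∈ frontier K) (hx : x ∉ K) (hdisj : Disjoint K (openSegment ℝ p x)) :
    ∃ f : E →L[ℝ] ℝ, (∀ y ∈ K, f y < f p) ∧ f p ≤ f x := by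
  have hpK : p ∉ K := fun h => hp.2 (by rwa [hKo.interior_eq])
  have hseg : Disjoint K (segment ℝ p x) := by
    rw [← insert_endpoints_openSegment, disjoint_insert_right, disjoint_insert_right]
    exact ⟨hpK, hx, hdisj⟩
  obtain ⟨f, c, hfK, hfseg⟩ := geometric_hahn_banach_open hKc hKo (convex_segment p x) hseg
  have hfp : f p = c := by
    refine le_antisymm ?_ (hfseg p (left_mem_segment ℝ p x))
    exact closure_lt_subset_le f.continuous continuous_const (closure_mono hfK hp.1)
  exact ⟨f, fun y hy => hfp ▸ hfK y hy, hfp ▸ hfseg x (right_mem_segment ℝ p x)⟩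

end Separation

section InnerProduct

variable {E : Type*} [NormedAddCommGroup E] [InnerProductSpace ℝ E]

theorem inner_eq_zero_of_isLocalExtr_norm_sub {Γ : ℝ → E} {s : ℝ} {w x : E}
    (hΓ : HasDerivAt Γ w s) (h : IsLocalExtr (fun t => ‖x - Γ t‖) s) : ⟪w, x - Γ s⟫ = 0 := by
  -- `‖·‖ ^ 2` is `‖·‖` followed by this monotone function
  have hmono : Monotone fun r : ℝ => max r 0 ^ 2 := fun _ _ hab =>
    pow_le_pow_left₀ (le_max_right _ _) (max_le_max_right 0 hab) 2
  have hsq : IsLocalExtr (fun t => ‖x - Γ t‖ ^ 2) s := by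
    simpa [Function.comp_def] using h.comp_mono hmono
  have := hsq.hasDerivAt_eq_zero ((hasDerivAt_const s x).sub hΓ).norm_sq
  simp only [Pi.sub_apply, zero_sub, inner_neg_right, real_inner_comm w] at this
  linarith

theorem norm_sub_le_norm_sub_of_inner_nonpos {x p y : E} (h : ⟪x - p, y - p⟫ ≤ 0) :
    ‖x - p‖ ≤ ‖x - y‖ := by
  have hexp : ‖x - y‖ ^ 2 = ‖x - p‖ ^ 2 - 2 * ⟪x - p, y - p⟫ + ‖y - p‖ ^ 2 := by
    rw [← norm_sub_sq_real, sub_sub_sub_cancel_right]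
  refine (sq_le_sq₀ (norm_nonneg _) (norm_nonneg _)).mp ?_
  nlinarith [sq_nonneg ‖y - p‖]

theorem exists_pos_eq_mul_inner_of_finrank_eq_two (hE : finrank ℝ E = 2) {w u : E} (hw : w ≠ 0)
    (hu : u ≠ 0) (hwu : ⟪w, u⟫ = 0) {f : E →L[ℝ] ℝ} (hf : f ≠ 0) (hfw : f w = 0)
    (hfu : 0 ≤ f u) : ∃ μ > 0, ∀ y, f y = μ * ⟪u, y⟫ := by
  have : FiniteDimensional ℝ E := .of_finrank_eq_succ hE
  set v := (InnerProductSpace.toDual ℝ E).symm f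
  have hv : ∀ y, ⟪v, y⟫ = f y := fun y => InnerProductSpace.toDual_symm_apply
  have hW : finrank ℝ (ℝ ∙ w)ᗮ = 1 := by
    have := Submodule.finrank_add_finrank_orthogonal (ℝ ∙ w)
    rw [finrank_span_singleton hw, hE] at this
    omega
  have hspan : ℝ ∙ u = (ℝ ∙ w)ᗮ := by
    refine Submodule.eq_of_le_of_finrank_eq ?_ (by rw [hW, finrank_span_singleton hu])
    rw [Submodule.span_singleton_le_iff_mem, Submodule.mem_orthogonal_singleton_iff_inner_right]
    exact hwu
  have hvW : v ∈ (ℝ ∙ w)ᗮ := by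
    rw [Submodule.mem_orthogonal_singleton_iff_inner_right, real_inner_comm, hv, hfw]
  obtain ⟨μ, hμ⟩ := Submodule.mem_span_singleton.mp (hspan ▸ hvW)
  have hfμ : ∀ y, f y = μ * ⟪u, y⟫ := fun y => by rw [← hv, ← hμ, real_inner_smul_left]
  have hμ : μ ≠ 0 := by
    rintro rfl
    exact hf (ContinuousLinearMap.ext fun y => by simp [hfμ y])
  have huu : 0 < ⟪u, u⟫ := real_inner_self_pos.mpr hu
  refine ⟨μ, lt_of_le_of_ne ?_ (Ne.symm hμ), hfμ⟩
  rw [hfμ] at hfu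
  exact nonneg_of_mul_nonneg_left hfu huu

theorem norm_sub_le_of_disjoint_openSegment (hE : finrank ℝ E = 2) {K : Set E} (hKo : IsOpen K)
    (hKc : Convex ℝ K) {Γ : ℝ → E} {s : ℝ} {w x : E} (hΓ : HasDerivAt Γ w s) (hw : w ≠ 0)
    (hrange : range Γ ⊆ closure K) (hs : Γ s ∈ frontier K) (hx : x ∉ closure K)
    (hwx : ⟪w, x - Γ s⟫ = 0) (hdisj : Disjoint K (openSegment ℝ (Γ s) x)) (t : ℝ) :
    ‖x - Γ s‖ ≤ ‖x - Γ t‖ := by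
  obtain ⟨f, hfK, hfx⟩ :=
    exists_forall_lt_apply_of_disjoint_openSegment hKo hKc hs (fun h => hx (subset_closure h)) hdisj
  have hfcl : ∀ y ∈ closure K, f y ≤ f (Γ s) := fun y hy =>
    closure_lt_subset_le f.continuous continuous_const (closure_mono hfK hy)
  have hfw : f w = 0 := by
    have hmax : IsLocalMax (fun t => f (Γ t)) s :=
      Filter.Eventually.of_forall fun t => hfcl _ (hrange (mem_range_self t))
    exact hmax.hasDerivAt_eq_zero (f.hasFDerivAt.comp_hasDerivAt s hΓ)
  have hf : f ≠ 0 := by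
    rintro rfl
    obtain ⟨y, hy⟩ := closure_nonempty_iff.mp ⟨_, hs.1⟩
    simpa using hfK y hy
  have hu : x - Γ s ≠ 0 := sub_ne_zero.mpr fun h => hx (h ▸ hs.1)
  obtain ⟨μ, hμ, hfμ⟩ := exists_pos_eq_mul_inner_of_finrank_eq_two hE hw hu hwx hf hfw
    (by rw [map_sub]; linarith)
  refine norm_sub_le_norm_sub_of_inner_nonpos (nonpos_of_mul_nonpos_right ?_ hμ)
  rw [← hfμ, map_sub, sub_nonpos]
  exact hfcl _ (hrange (mem_range_self t))

end InnerProduct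

theorem exists_forall_add_smul_mem_of_mem_openSegment {E : Type*} [NormedAddCommGroup E]
    [NormedSpace ℝ E] {K : Set E} (hKo : IsOpen K) (hKc : Convex ℝ K) {p x q : E}
    (hp : p ∈ closure K) (hpx : p ≠ x) (hq : q ∈ openSegment ℝ p x) (hqK : q ∈ K) :
    ∃ ε > 0, ∀ τ ∈ Ioo 0 ε, p + (τ / ‖x - p‖) • (x - p) ∈ K := by
  rw [openSegment_eq_image'] at hq
  obtain ⟨θ, ⟨hθ0, -⟩, rfl⟩ := hq
  have hu : 0 < ‖x - p‖ := norm_pos_iff.mpr (sub_ne_zero.mpr hpx.symm)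
  refine ⟨θ * ‖x - p‖, by positivity, fun τ ⟨hτ0, hτε⟩ => ?_⟩
  have hmem := hKc.add_smul_sub_mem_interior' hp (hKo.interior_eq ▸ hqK)
    (t := τ / (θ * ‖x - p‖)) ⟨by positivity, (div_le_one (by positivity)).mpr hτε.le⟩
  rw [hKo.interior_eq, add_sub_cancel_left, smul_smul] at hmem
  convert hmem using 3
  field_simp

theorem convex_side_distance_extremum_approached_from_inside_general
    (K : Set (EuclideanSpace ℝ (Fin 2)))
    (hKopen : IsOpen K) (hKconv : Convex ℝ K)
    (Γ : ℝ → EuclideanSpace ℝ (Fin 2))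
    (hC1 : ContDiff ℝ 1 Γ) (hunit : ∀ s, ‖deriv Γ s‖ = 1)
    (hrange : Set.range Γ = frontier K)
    (x : EuclideanSpace ℝ (Fin 2)) (hx : x ∉ closure K)
    (dx : ℝ → ℝ) (hdx : ∀ s, dx s = ‖x - Γ s‖)
    (sstar : ℝ)
    (hext : IsLocalMax dx sstar ∨ IsLocalMin dx sstar)
    (hnotmin : (⨅ s, dx s) < dx sstar) :
    ∃ ε > (0 : ℝ), ∀ τ ∈ Set.Ioo 0 ε,
      Γ sstar + (τ / ‖x - Γ sstar‖) • (x - Γ sstar) ∈ K := by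
  obtain rfl : dx = fun s => ‖x - Γ s‖ := funext hdx
  have hΓ : ∀ s, HasDerivAt Γ (deriv Γ s) s := fun s =>
    (hC1.differentiable one_ne_zero s).hasDerivAt
  have hp : Γ sstar ∈ frontier K := hrange ▸ mem_range_self sstar
  have hwx : ⟪deriv Γ sstar, x - Γ sstar⟫ = 0 :=
    inner_eq_zero_of_isLocalExtr_norm_sub (hΓ sstar) hext.symm
  obtain ⟨q, hqK, hq⟩ : (K ∩ openSegment ℝ (Γ sstar) x).Nonempty := by
    rw [← not_disjoint_iff_nonempty_inter]
    intro hdisj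
    refine hnotmin.not_ge (le_ciInf fun s => ?_)
    exact norm_sub_le_of_disjoint_openSegment finrank_euclideanSpace_fin hKopen hKconv (hΓ sstar)
      (norm_ne_zero_iff.mp (by simp [hunit])) (hrange.subset.trans frontier_subset_closure) hp hx
      hwx hdisj s
  exact exists_forall_add_smul_mem_of_mem_openSegment hKopen hKconv hp.1
    (fun h => hx (h ▸ hp.1)) hq hqK

/-- **Lemma 5.1' of the paper.** Let `K ⊆ ℝ²` be nonempty, open and convex, let `Γ`
be a `C¹` unit-speed curve whose range is the frontier of `K`, and let `x` lie
outside the closure of `K`. If `s*` is a local extremum point of the distance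
function `d_x(s) = ‖x - Γ(s)‖` which is not a global minimum point (its value
exceeds `m = inf d_x`), then the segment from `Γ(s*)` toward `x` initially lies
inside `K`. -/
theorem convex_side_distance_extremum_approached_from_inside
    (K : Set (EuclideanSpace ℝ (Fin 2))) (hKne : K.Nonempty)
    (hKopen : IsOpen K) (hKconv : Convex ℝ K)
    (Γ : ℝ → EuclideanSpace ℝ (Fin 2))
    (hC1 : ContDiff ℝ 1 Γ) (hunit : ∀ s, ‖deriv Γ s‖ = 1)
    (hrange : Set.range Γ = frontier K)
    (x : EuclideanSpace ℝ (Fin 2)) (hx : x ∉ closure K)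
    (dx : ℝ → ℝ) (hdx : ∀ s, dx s = ‖x - Γ s‖)
    (sstar : ℝ)
    (hext : IsLocalMax dx sstar ∨ IsLocalMin dx sstar)
    (hnotmin : (⨅ s, dx s) < dx sstar) :
    ∃ ε > (0 : ℝ), ∀ τ ∈ Set.Ioo 0 ε,
      Γ sstar + (τ / ‖x - Γ sstar‖) • (x - Γ sstar) ∈ K :=
  convex_side_distance_extremum_approached_from_inside_general K hKopen hKconv Γ hC1 hunit hrange x
    hx dx hdx sstar hext hnotmin
end
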